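/- Suppose a multilinear polynomial f in n variables can be written as a sum of at most N terms, where each term is a product of multilinear polynomials p_1,…,p_ℓ on pairwise disjoint variable sets X_1,…,X_ℓ with |X_i| ≤ √n for all i, and such that under a fixed balanced partition φ at most two of the sets φ(X_i) are bi-chromatic. Then rank_φ(f) ≤ N · 2^{√n}. -/

import Mathlib

open MvPolynomial

/-- The exponent vector of the multilinear monomial `∏_{i∈p} y_i · ∏_{j∈q} z_j`,
where the `Y` variables are `Sum.inl` and the `Z` variables are `Sum.inr`. -/
noncomputable def mlMonom (m : ℕ) (p q : Finset (Fin m)) : (Fin m ⊕ Fin m) →₀ ℕ :=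
  (∑ i ∈ p, Finsupp.single (Sum.inl i) 1) + (∑ j ∈ q, Finsupp.single (Sum.inr j) 1)

/-- The partial derivative matrix of a polynomial in the variables `Y ∪ Z`. -/
noncomputable def pdMatrix (F : Type) [Field F] (m : ℕ)
    (f : MvPolynomial (Fin m ⊕ Fin m) F) :
    Matrix (Finset (Fin m)) (Finset (Fin m)) F :=
  fun p q => f.coeff (mlMonom m p q)

noncomputable def pdRank (F : Type) [Field F] (m : ℕ)
    (f : MvPolynomial (Fin m ⊕ Fin m) F) : ℕ :=
  (pdMatrix F m f).rank

/-- A polynomial is multilinear if every variable has degree at most 1 in each monomial. -/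
def IsMultilinear {F V : Type*} [CommSemiring F] (f : MvPolynomial V F) : Prop :=
  ∀ mo ∈ f.support, ∀ v, mo v ≤ 1

/-- A set of variables is bi-chromatic under the balanced partition `φ` if its
image meets both the `Y`-variables (`Sum.inl`) and `Z`-variables (`Sum.inr`). -/
def Bichromatic {n m : ℕ} (φ : Fin n ≃ (Fin m ⊕ Fin m)) (S : Finset (Fin n)) : Prop :=
  (∃ x ∈ S, ∃ i, φ x = Sum.inl i) ∧ (∃ x ∈ S, ∃ i, φ x = Sum.inr i)

/-!
After renaming by `φ`, a term `∏ pᵢ` is a product of factors in the `Y`-variables only,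
factors in the `Z`-variables only, and the at most two bichromatic factors. Multiplying by a
polynomial in the `Y`-variables multiplies the partial derivative matrix on the left by a fixed
matrix, and one in the `Z`-variables multiplies it on the right, so neither raises the rank. The
product `B` of the bichromatic factors has at most `2√n` variables; the nonzero rows of its matrix
are indexed by subsets of its `Y`-variables and the nonzero columns by subsets of its
`Z`-variables, so its rank is at most `2 ^ min(#Y, #Z) ≤ 2 ^ √n`. Subadditivity of rank over the
`N` terms finishes the proof.
-/

namespace Matrix

variable {ι κ F : Type*} [Field F] [Fintype κ]

theorem rank_add_le (A B : Matrix ι κ F) : (A + B).rank ≤ A.rank + B.rank := by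
  rw [rank, rank, rank, mulVecLin_add]
  refine (Submodule.finrank_mono ?_).trans
    (Submodule.finrank_add_le_finrank_add_finrank _ _)
  rintro _ ⟨v, rfl⟩
  exact Submodule.add_mem_sup ⟨v, rfl⟩ ⟨v, rfl⟩

theorem rank_le_card_of_row_eq_zero [Fintype ι] {M : Matrix ι κ F} (s : Finset ι)
    (h : ∀ i ∉ s, M i = 0) : M.rank ≤ s.card := by
  classical
  rw [M.rank_eq_finrank_span_row]
  refine (Submodule.finrank_mono (Submodule.span_le.2 ?_)).trans
    ((finrank_span_finset_le_card (s.image M.row)).trans Finset.card_image_le)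
  rintro _ ⟨i, rfl⟩
  by_cases hi : i ∈ s
  · exact Submodule.subset_span (Finset.mem_coe.2 (Finset.mem_image_of_mem _ hi))
  · rw [row, h i hi]
    exact zero_mem _

end Matrix

def IsMonochromatic {R α β : Type*} [CommSemiring R] (g : MvPolynomial (α ⊕ β) R) : Prop :=
  g ∈ supported R (Set.range Sum.inl) ∨ g ∈ supported R (Set.range Sum.inr)

section PartialDerivativeMatrix

variable {F : Type} [Field F] {m : ℕ}

theorem mlMonom_apply_inl (p q : Finset (Fin m)) (i : Fin m) :
    mlMonom m p q (Sum.inl i) = if i ∈ p then 1 else 0 := by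
  classical
  simp [mlMonom, Finsupp.single_apply]

theorem single_add_mlMonom_erase {p : Finset (Fin m)} {i : Fin m} (hi : i ∈ p)
    (q : Finset (Fin m)) :
    Finsupp.single (Sum.inl i) 1 + mlMonom m (p.erase i) q = mlMonom m p q := by
  rw [mlMonom, mlMonom, ← add_assoc]
  congr 1
  exact Finset.add_sum_erase _ _ hi

theorem mlMonom_mapDomain_swap (p q : Finset (Fin m)) :
    (mlMonom m p q).mapDomain Sum.swap = mlMonom m q p := by
  simp [mlMonom, Finsupp.mapDomain_add, Finsupp.mapDomain_finsetSum, add_comm]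

theorem coeff_X_inl_mul_mlMonom (i : Fin m) (h : MvPolynomial (Fin m ⊕ Fin m) F)
    (p q : Finset (Fin m)) :
    (X (Sum.inl i) * h).coeff (mlMonom m p q)
      = if i ∈ p then h.coeff (mlMonom m (p.erase i) q) else 0 := by
  classical
  rw [coeff_X_mul']
  by_cases hi : i ∈ p
  · have hsupp : Sum.inl i ∈ (mlMonom m p q).support := by simp [mlMonom_apply_inl, hi]
    rw [if_pos hsupp, if_pos hi, ← single_add_mlMonom_erase hi, add_tsub_cancel_left]
  · have hsupp : Sum.inl i ∉ (mlMonom m p q).support := by simp [mlMonom_apply_inl, hi]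
    rw [if_neg hsupp, if_neg hi]

theorem pdMatrix_add (f g : MvPolynomial (Fin m ⊕ Fin m) F) :
    pdMatrix F m (f + g) = pdMatrix F m f + pdMatrix F m g := by
  ext p q
  exact coeff_add _ _ _

theorem pdMatrix_rename_swap (f : MvPolynomial (Fin m ⊕ Fin m) F) :
    pdMatrix F m (rename Sum.swap f) = (pdMatrix F m f).transpose := by
  ext p q
  rw [pdMatrix, ← mlMonom_mapDomain_swap q p,
    coeff_rename_mapDomain _ Sum.swap_leftInverse.injective]
  rfl

theorem pdRank_rename_swap (f : MvPolynomial (Fin m ⊕ Fin m) F) :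
    pdRank F m (rename Sum.swap f) = pdRank F m f := by
  rw [pdRank, pdMatrix_rename_swap, Matrix.rank_transpose, pdRank]

theorem pdRank_sum_le {ι : Type*} (s : Finset ι) (f : ι → MvPolynomial (Fin m ⊕ Fin m) F) :
    pdRank F m (∑ t ∈ s, f t) ≤ ∑ t ∈ s, pdRank F m (f t) := by
  classical
  induction s using Finset.induction_on with
  | empty =>
    have h0 : pdMatrix F m 0 = 0 := by ext; exact coeff_zero _
    simp [pdRank, h0]
  | insert a s ha ih =>
    rw [Finset.sum_insert ha, Finset.sum_insert ha, pdRank, pdMatrix_add]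
    exact (Matrix.rank_add_le _ _).trans (Nat.add_le_add_left ih _)

/-- The `g` with this property form a subalgebra, and `X (Sum.inl i)` has it: row `p` of
`pdMatrix F m (X (Sum.inl i) * h)` is row `p.erase i` of `pdMatrix F m h` if `i ∈ p`, and zero
otherwise. -/
theorem exists_pdMatrix_mul_eq_mul {g : MvPolynomial (Fin m ⊕ Fin m) F}
    (hg : g ∈ supported F (Set.range Sum.inl)) :
    ∃ L : Matrix (Finset (Fin m)) (Finset (Fin m)) F,
      ∀ h, pdMatrix F m (g * h) = L * pdMatrix F m h := by
  classical
  rw [supported_eq_adjoin_X] at hg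
  induction hg using Algebra.adjoin_induction with
  | mem x hx =>
    obtain ⟨_, ⟨i, rfl⟩, rfl⟩ := hx
    refine ⟨Matrix.of fun p r => if i ∈ p ∧ r = p.erase i then 1 else 0, fun h => ?_⟩
    ext p q
    simp [Matrix.mul_apply, pdMatrix, coeff_X_inl_mul_mlMonom, ite_and]
  | algebraMap c =>
    exact ⟨c • 1, fun h => by ext p q; simp [pdMatrix, algebraMap_eq, coeff_C_mul]⟩
  | add x y _ _ hx hy =>
    obtain ⟨L₁, h₁⟩ := hx
    obtain ⟨L₂, h₂⟩ := hy
    exact ⟨L₁ + L₂, fun h => by rw [add_mul, pdMatrix_add, h₁, h₂, Matrix.add_mul]⟩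
  | mul x y _ _ hx hy =>
    obtain ⟨L₁, h₁⟩ := hx
    obtain ⟨L₂, h₂⟩ := hy
    exact ⟨L₁ * L₂, fun h => by rw [mul_assoc, h₁, h₂, Matrix.mul_assoc]⟩

theorem pdRank_mul_le_of_mem_supported_inl {g : MvPolynomial (Fin m ⊕ Fin m) F}
    (hg : g ∈ supported F (Set.range Sum.inl)) (h : MvPolynomial (Fin m ⊕ Fin m) F) :
    pdRank F m (g * h) ≤ pdRank F m h := by
  obtain ⟨L, hL⟩ := exists_pdMatrix_mul_eq_mul hg
  rw [pdRank, pdRank, hL h]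
  exact Matrix.rank_mul_le_right _ _

theorem rename_swap_mem_supported_inl {g : MvPolynomial (Fin m ⊕ Fin m) F}
    (hg : g ∈ supported F (Set.range Sum.inr)) :
    rename Sum.swap g ∈ supported F (Set.range Sum.inl) := by
  classical
  rw [mem_supported] at hg ⊢
  intro v hv
  obtain ⟨w, hw, rfl⟩ := Finset.mem_image.1 (vars_rename _ _ hv)
  obtain ⟨j, rfl⟩ := hg hw
  exact ⟨j, rfl⟩

theorem pdRank_mul_le_of_mem_supported_inr {g : MvPolynomial (Fin m ⊕ Fin m) F}
    (hg : g ∈ supported F (Set.range Sum.inr)) (h : MvPolynomial (Fin m ⊕ Fin m) F) :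
    pdRank F m (g * h) ≤ pdRank F m h := by
  rw [← pdRank_rename_swap, map_mul, ← pdRank_rename_swap h]
  exact pdRank_mul_le_of_mem_supported_inl (rename_swap_mem_supported_inl hg) _

theorem IsMonochromatic.pdRank_mul_le {g : MvPolynomial (Fin m ⊕ Fin m) F}
    (hg : IsMonochromatic g) (h : MvPolynomial (Fin m ⊕ Fin m) F) :
    pdRank F m (g * h) ≤ pdRank F m h :=
  hg.elim (pdRank_mul_le_of_mem_supported_inl · h) (pdRank_mul_le_of_mem_supported_inr · h)

theorem pdRank_prod_mul_le {ι : Type*} (s : Finset ι)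
    (r : ι → MvPolynomial (Fin m ⊕ Fin m) F)
    (hr : ∀ i ∈ s, IsMonochromatic (r i)) (h : MvPolynomial (Fin m ⊕ Fin m) F) :
    pdRank F m ((∏ i ∈ s, r i) * h) ≤ pdRank F m h := by
  classical
  induction s using Finset.induction_on with
  | empty => simp
  | insert a s ha ih =>
    rw [Finset.prod_insert ha, mul_assoc]
    exact ((hr a (Finset.mem_insert_self a s)).pdRank_mul_le _).trans
      (ih fun i hi => hr i (Finset.mem_insert_of_mem hi))

theorem pdRank_le_two_pow_card_toLeft (g : MvPolynomial (Fin m ⊕ Fin m) F) :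
    pdRank F m g ≤ 2 ^ g.vars.toLeft.card := by
  classical
  rw [← Finset.card_powerset]
  refine Matrix.rank_le_card_of_row_eq_zero _ fun p hp => ?_
  ext q
  by_contra hne
  refine hp (Finset.mem_powerset.2 fun i hi => Finset.mem_toLeft.2 ?_)
  exact (mem_vars_iff_mem_support _).2
    ⟨_, mem_support_iff.2 hne, by simp [mlMonom_apply_inl, hi]⟩

theorem pdRank_le_two_pow_card_toRight (g : MvPolynomial (Fin m ⊕ Fin m) F) :
    pdRank F m g ≤ 2 ^ g.vars.toRight.card := by
  classical
  rw [← pdRank_rename_swap]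
  refine (pdRank_le_two_pow_card_toLeft _).trans
    (Nat.pow_le_pow_right two_pos (Finset.card_le_card fun j hj => ?_))
  obtain ⟨w, hw, hwj⟩ := Finset.mem_image.1 (vars_rename _ _ (Finset.mem_toLeft.1 hj))
  obtain rfl : w = Sum.inr j := by simpa using congrArg Sum.swap hwj
  exact Finset.mem_toRight.2 hw

theorem pdRank_le_two_pow_half_card_vars (g : MvPolynomial (Fin m ⊕ Fin m) F) :
    pdRank F m g ≤ 2 ^ (g.vars.card / 2) := by
  have hcard := Finset.card_toLeft_add_card_toRight (u := g.vars)
  rcases le_total g.vars.toLeft.card g.vars.toRight.card with hle | hle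
  · exact (pdRank_le_two_pow_card_toLeft g).trans (Nat.pow_le_pow_right two_pos (by omega))
  · exact (pdRank_le_two_pow_card_toRight g).trans (Nat.pow_le_pow_right two_pos (by omega))

theorem isMonochromatic_rename_of_not_bichromatic {n : ℕ}
    {φ : Fin n ≃ (Fin m ⊕ Fin m)} {p : MvPolynomial (Fin n) F} {X : Finset (Fin n)}
    (hp : p.vars ⊆ X) (hX : ¬ Bichromatic φ X) : IsMonochromatic (rename φ p) := by
  classical
  have hvars : ∀ v ∈ (rename φ p).vars, ∃ x ∈ X, φ x = v := fun v hv => by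
    obtain ⟨x, hx, rfl⟩ := Finset.mem_image.1 (vars_rename _ _ hv)
    exact ⟨x, hp hx, rfl⟩
  rw [IsMonochromatic, mem_supported, mem_supported]
  rcases not_and_or.1 hX with hY | hZ
  · refine Or.inr fun v hv => ?_
    obtain ⟨x, hx, rfl⟩ := hvars v hv
    rcases h : φ x with i | j
    · exact absurd ⟨x, hx, i, h⟩ hY
    · exact ⟨j, rfl⟩
  · refine Or.inl fun v hv => ?_
    obtain ⟨x, hx, rfl⟩ := hvars v hv
    rcases h : φ x with i | j
    · exact ⟨i, rfl⟩
    · exact absurd ⟨x, hx, j, h⟩ hZ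

theorem pdRank_rename_prod_le {n : ℕ} {ι : Type*} [Fintype ι]
    (φ : Fin n ≃ (Fin m ⊕ Fin m)) (p : ι → MvPolynomial (Fin n) F)
    (Xs : ι → Finset (Fin n)) (hvars : ∀ i, (p i).vars ⊆ Xs i)
    (B : Finset ι) (hB : ∀ i, Bichromatic φ (Xs i) → i ∈ B) :
    pdRank F m (rename φ (∏ i, p i)) ≤ 2 ^ ((∑ i ∈ B, (Xs i).card) / 2) := by
  classical
  have hmono : ∀ i ∈ Finset.univ \ B, IsMonochromatic (rename φ (p i)) := fun i hi =>
    isMonochromatic_rename_of_not_bichromatic (hvars i)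
      fun hbi => (Finset.mem_sdiff.1 hi).2 (hB i hbi)
  have hcard : (∏ i ∈ B, rename φ (p i)).vars.card ≤ ∑ i ∈ B, (Xs i).card :=
    calc _ ≤ (B.biUnion fun i => (rename φ (p i)).vars).card := Finset.card_le_card (vars_prod _)
      _ ≤ ∑ i ∈ B, (rename φ (p i)).vars.card := Finset.card_biUnion_le
      _ ≤ ∑ i ∈ B, (Xs i).card := Finset.sum_le_sum fun i _ =>
          (Finset.card_le_card (vars_rename _ _)).trans
            (Finset.card_image_le.trans (Finset.card_le_card (hvars i)))
  rw [map_prod, ← Finset.prod_sdiff (Finset.subset_univ B)]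
  calc _ ≤ pdRank F m (∏ i ∈ B, rename φ (p i)) := pdRank_prod_mul_le _ _ hmono _
    _ ≤ 2 ^ ((∏ i ∈ B, rename φ (p i)).vars.card / 2) := pdRank_le_two_pow_half_card_vars _
    _ ≤ _ := Nat.pow_le_pow_right two_pos (Nat.div_le_div_right hcard)

end PartialDerivativeMatrix

theorem natCast_two_pow_div_two_le_rpow {k : ℕ} {x : ℝ} (hk : (k : ℝ) ≤ 2 * x) :
    ((2 ^ (k / 2) : ℕ) : ℝ) ≤ (2 : ℝ) ^ x := by
  rw [Nat.cast_pow, Nat.cast_ofNat, ← Real.rpow_natCast]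
  refine Real.rpow_le_rpow_of_exponent_le one_le_two ?_
  have := Nat.cast_div_le (α := ℝ) (m := k) (n := 2)
  push_cast at this
  linarith

theorem rank_bound_for_structured_sum_general (F : Type) [Field F] (n N : ℕ)
    (φ : Fin n ≃ (Fin (n / 2) ⊕ Fin (n / 2)))
    (f : MvPolynomial (Fin n) F)
    (g : Fin N → MvPolynomial (Fin n) F) (hsum : f = ∑ t, g t)
    (hterm : ∀ t, ∃ (ℓ : ℕ) (p : Fin ℓ → MvPolynomial (Fin n) F)
        (Xs : Fin ℓ → Finset (Fin n)),
      g t = ∏ i, p i ∧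
      (∀ i, IsMultilinear (p i)) ∧
      (∀ i, (p i).vars ⊆ Xs i) ∧
      (∀ i j, i ≠ j → Disjoint (Xs i) (Xs j)) ∧
      (∀ i, ((Xs i).card : ℝ) ≤ Real.sqrt n) ∧
      (∃ i₁ i₂, ∀ i, Bichromatic φ (Xs i) → i = i₁ ∨ i = i₂)) :
    (pdRank F (n / 2) (MvPolynomial.rename φ f) : ℝ)
      ≤ (N : ℝ) * (2 : ℝ) ^ (Real.sqrt n) := by
  have hterm_le : ∀ t, (pdRank F (n / 2) (rename φ (g t)) : ℝ) ≤ 2 ^ Real.sqrt n := by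
    intro t
    obtain ⟨ℓ, p, Xs, hgt, -, hvars, -, hcard, i₁, i₂, hbi⟩ := hterm t
    have hB : ∀ i, Bichromatic φ (Xs i) → i ∈ ({i₁, i₂} : Finset (Fin ℓ)) :=
      fun i hi => by simpa using hbi i hi
    rw [hgt]
    refine (Nat.cast_le.2 (pdRank_rename_prod_le φ p Xs hvars _ hB)).trans
      (natCast_two_pow_div_two_le_rpow ?_)
    calc ((∑ i ∈ {i₁, i₂}, (Xs i).card : ℕ) : ℝ)
        = ∑ i ∈ {i₁, i₂}, ((Xs i).card : ℝ) := Nat.cast_sum _ _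
      _ ≤ ({i₁, i₂} : Finset (Fin ℓ)).card • Real.sqrt n :=
          Finset.sum_le_card_nsmul _ _ _ fun i _ => hcard i
      _ ≤ 2 * Real.sqrt n := by
          rw [nsmul_eq_mul]
          gcongr
          exact_mod_cast Finset.card_le_two
  calc (pdRank F (n / 2) (rename φ f) : ℝ)
      ≤ ∑ t, (pdRank F (n / 2) (rename φ (g t)) : ℝ) := by
        rw [hsum, map_sum]
        exact_mod_cast pdRank_sum_le _ _
    _ ≤ ∑ _t : Fin N, (2 : ℝ) ^ Real.sqrt n := Finset.sum_le_sum fun t _ => hterm_le t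
    _ = N * 2 ^ Real.sqrt n := by simp

/-- if `f` is a sum of at most `N` terms, each a product of
multilinear polynomials on pairwise disjoint variable sets of size at most
`√n`, at most two of which are bi-chromatic under the fixed balanced partition
`φ`, then `rank_φ(f) ≤ N · 2^{√n}`. -/
theorem rank_bound_for_structured_sum (F : Type) [Field F] (n N : ℕ)
    (φ : Fin n ≃ (Fin (n / 2) ⊕ Fin (n / 2)))
    (f : MvPolynomial (Fin n) F) (hml : IsMultilinear f)
    (g : Fin N → MvPolynomial (Fin n) F) (hsum : f = ∑ t, g t)
    (hterm : ∀ t, ∃ (ℓ : ℕ) (p : Fin ℓ → MvPolynomial (Fin n) F)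
        (Xs : Fin ℓ → Finset (Fin n)),
      g t = ∏ i, p i ∧
      (∀ i, IsMultilinear (p i)) ∧
      (∀ i, (p i).vars ⊆ Xs i) ∧
      (∀ i j, i ≠ j → Disjoint (Xs i) (Xs j)) ∧
      (∀ i, ((Xs i).card : ℝ) ≤ Real.sqrt n) ∧
      (∃ i₁ i₂, ∀ i, Bichromatic φ (Xs i) → i = i₁ ∨ i = i₂)) :
    (pdRank F (n / 2) (MvPolynomial.rename φ f) : ℝ)
      ≤ (N : ℝ) * (2 : ℝ) ^ (Real.sqrt n) :=
  rank_bound_for_structured_sum_general F n N φ f g hsum hterm
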